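/- For any Hermitian N×N matrix W, E ∈ ℝ and η > 0, the absolute value of the resolvent admits the integral representation |G(E + iη)| = (2/π) ∫_0^∞ Im G(E + i√(η² + v²)) / √(η² + v²) dv, where G(ζ) = (W - ζ)^{-1}, |G| = (GG*)^{1/2}, and Im G = (G - G*)/(2i). -/

import Mathlib

open Matrix MeasureTheory Asymptotics
open scoped ComplexOrder BigOperators

/-- Normalized trace `⟨M⟩ = N⁻¹ Tr M`. -/
noncomputable def ntr {N : ℕ} (M : Matrix (Fin N) (Fin N) ℂ) : ℂ :=
  (N : ℂ)⁻¹ * M.trace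

/-- `|A| = (A Aᴴ)^{1/2}`. -/
noncomputable def matAbs {N : ℕ} (A : Matrix (Fin N) (Fin N) ℂ) : Matrix (Fin N) (Fin N) ℂ :=
  ((Matrix.posSemidef_self_mul_conjTranspose A).1.eigenvectorUnitary : Matrix (Fin N) (Fin N) ℂ) *
    diagonal ((RCLike.ofReal : ℝ → ℂ) ∘ Real.sqrt ∘ (Matrix.posSemidef_self_mul_conjTranspose A).1.eigenvalues) *
    (star (Matrix.posSemidef_self_mul_conjTranspose A).1.eigenvectorUnitary : Matrix (Fin N) (Fin N) ℂ)

/-- Euclidean operator norm of a matrix. -/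
noncomputable def opNorm {N : ℕ} (A : Matrix (Fin N) (Fin N) ℂ) : ℝ :=
  ‖Matrix.toEuclideanCLM (𝕜 := ℂ) A‖

/-- Normalized `p`-th Schatten norm `⟨|A|^p⟩^{1/p}`. -/
noncomputable def schatten {N : ℕ} (p : ℕ) (A : Matrix (Fin N) (Fin N) ℂ) : ℝ :=
  (ntr (matAbs A ^ p)).re ^ ((p : ℝ)⁻¹)

/-- The `ℓ`-weighted `(2,p)`-Schatten norm, `p ∈ [2,∞]` (`p = ⊤` uses the operator norm). -/
noncomputable def wnorm {N : ℕ} (p : ℕ∞) (ℓ : ℝ) (A : Matrix (Fin N) (Fin N) ℂ) : ℝ :=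
  p.recTopCoe (schatten 2 A / ℓ ^ ((2:ℝ)⁻¹) + opNorm A)
    (fun q => schatten 2 A / ℓ ^ ((2:ℝ)⁻¹) + schatten q A / ℓ ^ ((q : ℝ)⁻¹))

/-- Resolvent `G(ζ) = (W - ζ)⁻¹`. -/
noncomputable def resOf {N : ℕ} (W : Matrix (Fin N) (Fin N) ℂ) (ζ : ℂ) :
    Matrix (Fin N) (Fin N) ℂ :=
  (W - ζ • (1 : Matrix (Fin N) (Fin N) ℂ))⁻¹

/-- `Im G = (G - Gᴴ)/(2i)`. -/
noncomputable def imPart {N : ℕ} (G : Matrix (Fin N) (Fin N) ℂ) : Matrix (Fin N) (Fin N) ℂ :=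
  (2 * Complex.I)⁻¹ • (G - Gᴴ)

/-- Bessel function of the first kind of order one (integral representation). -/
noncomputable def besselJ1 (x : ℝ) : ℝ :=
  (1 / Real.pi) * ∫ θ in (0:ℝ)..Real.pi, Real.cos (θ - x * Real.sin θ)

/-- Semicircle density on `[-2,2]`. -/
noncomputable def rhoSC (x : ℝ) : ℝ := (1 / (2 * Real.pi)) * Real.sqrt (4 - x ^ 2)

/-- Stieltjes transform of the semicircle law. -/
noncomputable def mSC (z : ℂ) : ℂ := ∫ x in (-2:ℝ)..2, (rhoSC x : ℂ) / (x - z)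

/-- `φ(t) = J₁(2t)/t`, with `φ(0) = 1`. -/
noncomputable def phiSC (t : ℝ) : ℝ := if t = 0 then 1 else besselJ1 (2 * t) / t


/-! Diagonalise `W = U diag(μ) U*`. Both sides are then `U diag(·) U*` of scalar functions of the
eigenvalues, so it suffices to prove the identity for `W = μ ∈ ℝ`. There, with `s² = η² + v²` and
`c = |μ - E - iη|`, the integrand `Im (μ - E - is)⁻¹ / s` equals `(c² + v²)⁻¹`, whose integral over
`(0, ∞)` is `π / (2c)`. -/

open Complex Real Set

lemma inv_sq_add_mul_sq (c x : ℝ) :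
    (c ^ 2 + (c * x) ^ 2)⁻¹ = (c ^ 2)⁻¹ * (1 + x ^ 2)⁻¹ := by
  rw [← mul_inv]; ring

lemma integrableOn_Ioi_inv_sq_add_sq {c : ℝ} (hc : 0 < c) :
    IntegrableOn (fun v : ℝ => (c ^ 2 + v ^ 2)⁻¹) (Ioi 0) := by
  have h := integrableOn_Ioi_comp_mul_left_iff (fun v : ℝ => (c ^ 2 + v ^ 2)⁻¹) 0 hc
  rw [mul_zero] at h
  refine h.mp ?_
  simp_rw [inv_sq_add_mul_sq c]
  exact integrable_inv_one_add_sq.integrableOn.const_mul _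

lemma integral_Ioi_inv_sq_add_sq {c : ℝ} (hc : 0 < c) :
    ∫ v in Ioi (0 : ℝ), (c ^ 2 + v ^ 2)⁻¹ = π / (2 * c) := by
  have h := integral_comp_mul_left_Ioi (fun v : ℝ => (c ^ 2 + v ^ 2)⁻¹) 0 hc
  simp_rw [mul_zero, inv_sq_add_mul_sq c, integral_const_mul, integral_Ioi_inv_one_add_sq,
    arctan_zero, sub_zero, smul_eq_mul] at h
  field_simp at h ⊢
  linarith

lemma im_inv_ofReal_sub (x E s : ℝ) :
    ((x : ℂ) - (E + s * I))⁻¹.im = s / ((x - E) ^ 2 + s ^ 2) := by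
  simp only [inv_im, sub_im, ofReal_im, add_im, mul_im, ofReal_re, I_im, mul_one, I_re, mul_zero,
    add_zero, zero_add, zero_sub, neg_neg, normSq_apply, sub_re, add_re, mul_re, sub_self, mul_neg,
    neg_mul]
  ring

lemma ofReal_sub_add_mul_I_ne_zero (x E : ℝ) {η : ℝ} (hη : η ≠ 0) : (x : ℂ) - (E + η * I) ≠ 0 :=
  fun h => hη (by simpa using congrArg Complex.im h)

lemma norm_ofReal_sub_sq (x E η : ℝ) : ‖(x : ℂ) - (E + η * I)‖ ^ 2 = (x - E) ^ 2 + η ^ 2 := by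
  rw [Complex.sq_norm, Complex.normSq_apply]
  simp only [sub_re, ofReal_re, add_re, mul_re, I_re, mul_zero, ofReal_im, I_im, mul_one, sub_self,
    add_zero, sub_im, add_im, mul_im, zero_add, zero_sub, mul_neg, neg_mul, neg_neg]
  ring

lemma im_inv_ofReal_sub_div_sqrt (x E : ℝ) {η : ℝ} (hη : η ≠ 0) (v : ℝ) :
    ((x : ℂ) - (E + √(η ^ 2 + v ^ 2) * I))⁻¹.im / √(η ^ 2 + v ^ 2)
      = (‖(x : ℂ) - (E + η * I)‖ ^ 2 + v ^ 2)⁻¹ := by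
  have hs : 0 < √(η ^ 2 + v ^ 2) := sqrt_pos.mpr (by positivity)
  rw [im_inv_ofReal_sub, sq_sqrt (by positivity), norm_ofReal_sub_sq, div_div_cancel_left' hs.ne']
  ring

lemma integrableOn_im_inv_ofReal_sub_div_sqrt (x E : ℝ) {η : ℝ} (hη : η ≠ 0) :
    IntegrableOn (fun v : ℝ => ((x : ℂ) - (E + √(η ^ 2 + v ^ 2) * I))⁻¹.im / √(η ^ 2 + v ^ 2))
      (Ioi 0) := by
  simp_rw [im_inv_ofReal_sub_div_sqrt x E hη]
  exact integrableOn_Ioi_inv_sq_add_sq (norm_pos_iff.mpr (ofReal_sub_add_mul_I_ne_zero x E hη))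

theorem norm_inv_ofReal_sub_eq_integral (x E : ℝ) {η : ℝ} (hη : η ≠ 0) :
    ‖((x : ℂ) - (E + η * I))⁻¹‖
      = 2 / π * ∫ v in Ioi 0, ((x : ℂ) - (E + √(η ^ 2 + v ^ 2) * I))⁻¹.im / √(η ^ 2 + v ^ 2) := by
  have hpos : 0 < ‖(x : ℂ) - (E + η * I)‖ := norm_pos_iff.mpr (ofReal_sub_add_mul_I_ne_zero x E hη)
  simp_rw [im_inv_ofReal_sub_div_sqrt x E hη, integral_Ioi_inv_sq_add_sq hpos, norm_inv]
  field_simp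

namespace Matrix

open Unitary
open scoped MatrixOrder

variable {n : Type*} [Fintype n] [DecidableEq n]

lemma conjStarAlgAut_diagonal_apply (U : unitaryGroup n ℂ) (d : n → ℂ) (a b : n) :
    conjStarAlgAut ℂ _ U (diagonal d) a b = ∑ i, U a i * d i * star (U b i) := by
  rw [conjStarAlgAut_apply, mul_apply]
  simp only [mul_diagonal, star_apply]

lemma conjStarAlgAut_diagonal_nonneg (U : unitaryGroup n ℂ) {d : n → ℂ} (hd : ∀ i, 0 ≤ d i) :
    0 ≤ conjStarAlgAut ℂ _ U (diagonal d) :=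
  map_nonneg _ (PosSemidef.diagonal hd).nonneg

end Matrix

section Spectral

open Unitary
open scoped MatrixOrder

variable {N : ℕ}

lemma matAbs_eq_sqrt (A : Matrix (Fin N) (Fin N) ℂ) : matAbs A = CFC.sqrt (A * Aᴴ) := by
  have hA := posSemidef_self_mul_conjTranspose A
  rw [CFC.sqrt_eq_real_sqrt _ hA.nonneg, cfcₙ_eq_cfc, hA.1.cfc_eq, IsHermitian.cfc,
    conjStarAlgAut_apply]
  rfl

lemma matAbs_conjStarAlgAut_diagonal (U : unitaryGroup (Fin N) ℂ) (d : Fin N → ℂ) :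
    matAbs (conjStarAlgAut ℂ _ U (diagonal d))
      = conjStarAlgAut ℂ _ U (diagonal fun i => (‖d i‖ : ℂ)) := by
  rw [matAbs_eq_sqrt]
  refine CFC.sqrt_unique ?_
    (conjStarAlgAut_diagonal_nonneg U fun i => Complex.zero_le_real.mpr (norm_nonneg _))
  rw [← star_eq_conjTranspose, ← map_star, ← map_mul, ← map_mul, star_eq_conjTranspose,
    diagonal_conjTranspose, diagonal_mul_diagonal, diagonal_mul_diagonal]
  congr 2
  funext i
  rw [Pi.star_apply, Complex.star_def, Complex.mul_conj, Complex.normSq_eq_norm_sq]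
  push_cast
  ring

lemma imPart_conjStarAlgAut_diagonal (U : unitaryGroup (Fin N) ℂ) (d : Fin N → ℂ) :
    imPart (conjStarAlgAut ℂ _ U (diagonal d))
      = conjStarAlgAut ℂ _ U (diagonal fun i => ((d i).im : ℂ)) := by
  rw [imPart, ← star_eq_conjTranspose, ← map_star, ← map_sub, ← map_smul, star_eq_conjTranspose,
    diagonal_conjTranspose, diagonal_sub, ← diagonal_smul]
  congr 2
  funext i
  rw [Pi.smul_apply, Pi.star_apply, Complex.star_def, Complex.sub_conj, smul_eq_mul]
  push_cast
  field_simp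

lemma resOf_eq_conjStarAlgAut_diagonal {W : Matrix (Fin N) (Fin N) ℂ} (hW : W.IsHermitian) {ζ : ℂ}
    (hζ : ∀ i, (hW.eigenvalues i : ℂ) - ζ ≠ 0) :
    resOf W ζ = conjStarAlgAut ℂ _ hW.eigenvectorUnitary
      (diagonal fun i => ((hW.eigenvalues i : ℂ) - ζ)⁻¹) := by
  have hshift : W - ζ • 1 = conjStarAlgAut ℂ _ hW.eigenvectorUnitary
      (diagonal fun i => (hW.eigenvalues i : ℂ) - ζ) := by
    conv_lhs => rw [hW.spectral_theorem]
    rw [← map_one (conjStarAlgAut ℂ _ hW.eigenvectorUnitary), ← map_smul, ← map_sub]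
    congr 1
    ext i j
    by_cases h : i = j <;> simp [h]
  rw [resOf, hshift]
  refine inv_eq_right_inv ?_
  rw [← map_mul, diagonal_mul_diagonal, ← map_one (conjStarAlgAut ℂ _ hW.eigenvectorUnitary),
    ← diagonal_one]
  simp_rw [mul_inv_cancel₀ (hζ _)]

end Spectral

/-- integral representation of `|G(E+iη)|` (stated entrywise). -/
theorem absG_integral_rep {N : ℕ} (W : Matrix (Fin N) (Fin N) ℂ) (hW : W.IsHermitian)
    (E η : ℝ) (hη : 0 < η) (a b : Fin N) :
    matAbs (resOf W (E + η * Complex.I)) a b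
      = ((2 / Real.pi : ℝ) : ℂ) * ∫ v in Set.Ioi (0:ℝ),
          imPart (resOf W (E + (Real.sqrt (η ^ 2 + v ^ 2) : ℝ) * Complex.I)) a b /
            ((Real.sqrt (η ^ 2 + v ^ 2) : ℝ) : ℂ) := by
  set U := hW.eigenvectorUnitary
  set μ := hW.eigenvalues
  have hres : ∀ {s : ℝ}, s ≠ 0 → resOf W (E + s * I)
      = Unitary.conjStarAlgAut ℂ _ U (diagonal fun i => ((μ i : ℂ) - (E + s * I))⁻¹) :=
    fun hs => resOf_eq_conjStarAlgAut_diagonal hW fun i => ofReal_sub_add_mul_I_ne_zero _ _ hs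
  have hintegrand : ∀ v : ℝ,
      imPart (resOf W (E + √(η ^ 2 + v ^ 2) * I)) a b / (√(η ^ 2 + v ^ 2) : ℂ)
        = ∑ i, U a i * (((μ i - (E + √(η ^ 2 + v ^ 2) * I))⁻¹.im / √(η ^ 2 + v ^ 2) : ℝ) : ℂ)
            * star (U b i) := by
    intro v
    have hs : √(η ^ 2 + v ^ 2) ≠ 0 := (sqrt_pos.mpr (by positivity)).ne'
    rw [hres hs, imPart_conjStarAlgAut_diagonal, conjStarAlgAut_diagonal_apply, Finset.sum_div]
    refine Finset.sum_congr rfl fun i _ => ?_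
    push_cast
    ring
  rw [setIntegral_congr_fun measurableSet_Ioi fun v _ => hintegrand v, integral_finsetSum _
    fun i _ => ((integrableOn_im_inv_ofReal_sub_div_sqrt _ E hη.ne').ofReal.const_mul _).mul_const _,
    hres hη.ne', matAbs_conjStarAlgAut_diagonal, conjStarAlgAut_diagonal_apply, Finset.mul_sum]
  refine Finset.sum_congr rfl fun i _ => ?_
  rw [integral_mul_const, integral_const_mul, integral_complex_ofReal,
    norm_inv_ofReal_sub_eq_integral _ E hη.ne']
  push_cast
  ring
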